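/- arXiv:0909.0338 — 4 statements merged into one kernel-verified Lean document; each statement's English description precedes it below -/
import Mathlib

section
/- Let Zᵢ, i ∈ ℕ, be i.i.d. standard normal random variables and wₙ = n/√(2π). Then for every y > 0, limₙ P[ wₙ · min_{i=1,…,n} |Zᵢ| > y ] = e^{−2y}; i.e., wₙ · min_{i≤n}|Zᵢ| converges in distribution to an exponential distribution with mean 1/2. -/
open MeasureTheory ProbabilityTheory Filter Topology Real

/-!
The event `wₙ · minᵢ |Zᵢ| > y` is the intersection of the independent events `|Zᵢ| > tₙ`
with `tₙ = y √(2π) / n`, so its probability is `(1 - pₙ)ⁿ` where `pₙ = P[|Z₀| ≤ tₙ]`.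
By the fundamental theorem of calculus `pₙ ≈ 2 tₙ φ(0) = 2y / n`, where `φ(0) = 1/√(2π)` is the
Gaussian density at `0`, and `(1 - pₙ)ⁿ → e^{-2y}` because `n pₙ → 2y`.
-/

theorem lt_ciInf_iff_of_finite {ι α : Type*} [Finite ι] [Nonempty ι]
    [ConditionallyCompleteLinearOrder α] {f : ι → α} {a : α} :
    a < ⨅ i, f i ↔ ∀ i, a < f i := by
  obtain ⟨i₀, hi₀⟩ := exists_eq_ciInf_of_finite (f := f)
  exact ⟨fun h i => h.trans_le (ciInf_le (Set.finite_range f).bddBelow i),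
    fun h => hi₀ ▸ h i₀⟩

theorem setOf_mul_iInf_gt_eq_biInter {Ω α : Type*} (Z : ℕ → Ω → α) (g : α → ℝ)
    {n : ℕ} (hn : n ≠ 0) {w : ℝ} (hw : 0 < w) (y : ℝ) :
    {ω | w * ⨅ i : Fin n, g (Z i ω) > y} =
      ⋂ i ∈ Finset.range n, Z i ⁻¹' (g ⁻¹' Set.Ioi (y / w)) := by
  have : Nonempty (Fin n) := ⟨⟨0, Nat.pos_of_ne_zero hn⟩⟩
  ext ω
  simp only [Set.mem_ofPred_eq, gt_iff_lt, ← div_lt_iff₀' hw, lt_ciInf_iff_of_finite,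
    Set.mem_iInter, Finset.mem_range, Set.mem_preimage, Set.mem_Ioi]
  exact ⟨fun h i hi => h ⟨i, hi⟩, fun h i => h i i.2⟩

theorem abs_preimage_Ioi_eq_compl_Icc (t : ℝ) :
    abs ⁻¹' Set.Ioi t = (Set.Icc (-t) t)ᶜ := by
  ext x
  simp [← abs_le]

theorem iIndepFun.measure_biInter_preimage_eq_pow {Ω ι α : Type*} [MeasurableSpace Ω]
    [MeasurableSpace α] {μ : Measure Ω} {ν : Measure α} {Z : ι → Ω → α}
    (hZ : ∀ i, AEMeasurable (Z i) μ) (hindep : iIndepFun Z μ) (hlaw : ∀ i, μ.map (Z i) = ν)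
    {s : Set α} (hs : MeasurableSet s) (I : Finset ι) :
    μ (⋂ i ∈ I, Z i ⁻¹' s) = ν s ^ I.card := by
  rw [hindep.meas_biInter fun i _ => ⟨s, hs, rfl⟩, ← Finset.prod_const]
  refine Finset.prod_congr rfl fun i _ => ?_
  rw [← hlaw i, Measure.map_apply_of_aemeasurable (hZ i) hs]

theorem tendsto_inv_mul_intervalIntegral_neg_self {f : ℝ → ℝ} (hf : Continuous f) :
    Tendsto (fun t => t⁻¹ * ∫ x in -t..t, f x) (𝓝[≠] 0) (𝓝 (2 * f 0)) := by
  set F := fun u => ∫ x in (0 : ℝ)..u, f x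
  have hF : HasDerivAt F (f 0) 0 := (hf.integral_hasStrictDerivAt 0 0).hasDerivAt
  have hsplit : (fun t => ∫ x in -t..t, f x) = fun t => F t - F (-t) := funext fun t =>
    (intervalIntegral.integral_interval_sub_left (hf.intervalIntegrable 0 t)
      (hf.intervalIntegrable 0 (-t))).symm
  have hG : HasDerivAt (fun t => ∫ x in -t..t, f x) (2 * f 0) 0 := by
    rw [hsplit, two_mul, ← sub_neg_eq_add, ← mul_neg_one (f 0)]
    exact hF.sub (hF.comp_of_eq 0 (hasDerivAt_neg 0) neg_zero.symm)
  simpa using hG.tendsto_slope_zero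

theorem tendsto_nat_mul_intervalIntegral_neg_div {f : ℝ → ℝ} (hf : Continuous f) {c : ℝ}
    (hc : 0 < c) :
    Tendsto (fun n : ℕ => n * ∫ x in -(c / n)..c / n, f x) atTop (𝓝 (2 * c * f 0)) := by
  have hcn : Tendsto (fun n : ℕ => c / n) atTop (𝓝[≠] 0) :=
    tendsto_nhdsWithin_iff.2 ⟨tendsto_const_div_atTop_nhds_zero_nat c,
      (eventually_ne_atTop 0).mono fun n hn => by simp [hc.ne', hn]⟩
  have := ((tendsto_inv_mul_intervalIntegral_neg_self hf).comp hcn).const_mul c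
  rw [← mul_assoc, mul_comm c] at this
  refine this.congr fun n => ?_
  simp only [Function.comp_apply, inv_div, ← mul_assoc]
  rw [mul_div_cancel₀ _ hc.ne']

theorem continuous_gaussianPDFReal (m : ℝ) (v : NNReal) : Continuous (gaussianPDFReal m v) := by
  rw [gaussianPDFReal_def]
  fun_prop

theorem gaussianReal_Icc_toReal (m : ℝ) {v : NNReal} (hv : v ≠ 0) {a b : ℝ} (hab : a ≤ b) :
    (gaussianReal m v (Set.Icc a b)).toReal = ∫ x in a..b, gaussianPDFReal m v x := by
  rw [gaussianReal_apply_eq_integral m hv, ENNReal.toReal_ofReal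
    (integral_nonneg fun x => gaussianPDFReal_nonneg m v x), intervalIntegral.integral_of_le hab,
    integral_Icc_eq_integral_Ioc]

theorem tendsto_nat_mul_gaussianReal_Icc_neg_div {v : NNReal} (hv : v ≠ 0) {c : ℝ} (hc : 0 < c) :
    Tendsto (fun n : ℕ => n * (gaussianReal 0 v (Set.Icc (-(c / n)) (c / n))).toReal) atTop
      (𝓝 (2 * c / √(2 * π * v))) := by
  have hφ : gaussianPDFReal 0 v 0 = (√(2 * π * v))⁻¹ := by simp [gaussianPDFReal]
  have := tendsto_nat_mul_intervalIntegral_neg_div (continuous_gaussianPDFReal 0 v) hc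
  rw [hφ, ← div_eq_mul_inv] at this
  refine this.congr fun n => ?_
  rw [gaussianReal_Icc_toReal 0 hv (neg_le_self (by positivity))]

/-- If `Zᵢ` are i.i.d. standard normal and `wₙ = n/√(2π)`, then
`wₙ · min_{i<n} |Zᵢ|` converges in distribution to the exponential law with mean `1/2`:
for every `y > 0`, `P[wₙ minᵢ |Zᵢ| > y] → e^{−2y}`. -/
theorem min_abs_iid_gaussian_tendsto_exponential {Ω : Type*} [MeasurableSpace Ω]
    (μ : Measure Ω) [IsProbabilityMeasure μ] (Z : ℕ → Ω → ℝ)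
    (hmeas : ∀ i, Measurable (Z i))
    (hindep : iIndepFun Z μ)
    (hlaw : ∀ i, μ.map (Z i) = gaussianReal 0 1)
    (y : ℝ) (hy : 0 < y) :
    Tendsto (fun n : ℕ =>
        (μ {ω | (n / Real.sqrt (2 * π)) * (⨅ i : Fin n, |Z i ω|) > y}).toReal)
      atTop (𝓝 (Real.exp (-2 * y))) := by
  have hc : 0 < √(2 * π) := by positivity
  have hsmall : Tendsto (fun n : ℕ =>
      n * -(gaussianReal 0 1 (Set.Icc (-(y * √(2 * π) / n)) (y * √(2 * π) / n))).toReal)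
      atTop (𝓝 (-2 * y)) := by
    have := (tendsto_nat_mul_gaussianReal_Icc_neg_div one_ne_zero (mul_pos hy hc)).neg
    rw [NNReal.coe_one, mul_one, mul_div_assoc, mul_div_cancel_right₀ _ hc.ne', ← neg_mul] at this
    simpa only [mul_neg] using this
  refine (Real.tendsto_one_add_pow_exp_of_tendsto hsmall).congr' ?_
  filter_upwards [eventually_ne_atTop 0] with n hn
  rw [setOf_mul_iInf_gt_eq_biInter Z abs hn (by positivity),
    iIndepFun.measure_biInter_preimage_eq_pow (fun i => (hmeas i).aemeasurable) hindep hlaw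
      (continuous_abs.measurable measurableSet_Ioi),
    Finset.card_range, ENNReal.toReal_pow, abs_preimage_Ioi_eq_compl_Icc, div_div_eq_mul_div,
    prob_compl_eq_one_sub measurableSet_Icc, ENNReal.toReal_sub_of_le prob_le_one ENNReal.one_ne_top,
    ENNReal.toReal_one, sub_eq_add_neg]
end

section
/- Let uₙ be a sequence of positive reals with √(2π) uₙ e^{uₙ²/2} ~ n as n → ∞ (ratio tends to 1). Then uₙ = √(2 log n) − ((1/2) log log n + log(2√π) + o(1)) / √(2 log n) as n → ∞. -/
/-!
Taking logarithms, the hypothesis says that `d := u² + 2 log u − s²` tends to `−log (2π)`,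
where `s = √(2 log n)`. Hence `u → ∞` and `s / u → 1`. Writing
`s (u − s) = s (d − 2 log u) / (u + s)` and `log s = log u + log (s / u)`, the terms in `log u`
cancel up to `(1 − s/u) log u = O((log u / u)²)`, so `s (u − s) + log s → −log (2π) / 2`.
-/

open Filter Topology Real

section

variable {α : Type*} {l : Filter α}

lemma tendsto_atTop_of_sq_add_two_mul_log {u : α → ℝ} (hu : ∀ᶠ x in l, 0 < u x)
    (h : Tendsto (fun x => u x ^ 2 + 2 * log (u x)) l atTop) : Tendsto u l atTop := by
  refine tendsto_atTop.2 fun M => ?_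
  filter_upwards [hu, h.eventually_ge_atTop ((|M| + 1) ^ 2)] with x hx hM
  have hlog : log (u x) < u x := (log_le_sub_one_of_pos hx).trans_lt (by linarith)
  nlinarith [abs_nonneg M, le_abs_self M]

lemma sq_div_eq_one_add_sub {u s : ℝ} (hu : 0 < u) :
    (s / u) ^ 2 = 1 + 2 * (log u / u) * u⁻¹ - (u ^ 2 + 2 * log u - s ^ 2) * u⁻¹ ^ 2 := by
  field_simp
  ring

/-- Every term on the right has a limit once `s / u → 1`, `log u / u → 0` and `u → ∞`. -/
lemma mul_sub_add_log_eq {u s : ℝ} (hu : 0 < u) (hs : 0 < s) :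
    s * (u - s) + log s =
      s / u / (1 + s / u) * (u ^ 2 + 2 * log u - s ^ 2)
        + ((u ^ 2 + 2 * log u - s ^ 2) * (log u / u) / u - 2 * (log u / u) ^ 2) / (1 + s / u) ^ 2
        + log (s / u) := by
  rw [log_div hs.ne' hu.ne']
  field_simp
  ring

theorem tendsto_mul_sub_add_log_of_tendsto_sq_add_two_mul_log_sub_sq {u s : α → ℝ} {a : ℝ}
    (hu : ∀ᶠ x in l, 0 < u x) (hs : Tendsto s l atTop)
    (hd : Tendsto (fun x => u x ^ 2 + 2 * log (u x) - s x ^ 2) l (𝓝 a)) :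
    Tendsto (fun x => s x * (u x - s x) + log (s x)) l (𝓝 (a / 2)) := by
  have hu_top : Tendsto u l atTop :=
    tendsto_atTop_of_sq_add_two_mul_log hu <|
      (((tendsto_pow_atTop two_ne_zero).comp hs).atTop_add hd).congr fun x => by
        simp only [Function.comp_apply]; ring
  have hinv : Tendsto (fun x => (u x)⁻¹) l (𝓝 0) := hu_top.inv_tendsto_atTop
  have hlog : Tendsto (fun x => log (u x) / u x) l (𝓝 0) :=
    isLittleO_log_id_atTop.tendsto_div_nhds_zero.comp hu_top
  have hratio : Tendsto (fun x => s x / u x) l (𝓝 1) := by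
    have hsq : Tendsto (fun x => (s x / u x) ^ 2) l (𝓝 1) := by
      have := ((tendsto_const_nhds (x := (1 : ℝ))).add ((hlog.const_mul 2).mul hinv)).sub
        (hd.mul (hinv.pow 2))
      simp only [mul_zero, zero_pow two_ne_zero, add_zero, sub_zero] at this
      exact this.congr' (by filter_upwards [hu] with x hx using (sq_div_eq_one_add_sub hx).symm)
    have := hsq.sqrt
    rw [sqrt_one] at this
    refine this.congr' ?_
    filter_upwards [hu, hs.eventually_gt_atTop 0] with x hx hsx
    exact sqrt_sq (div_pos hsx hx).le
  have hρ : Tendsto (fun x => 1 + s x / u x) l (𝓝 2) := by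
    simpa [one_add_one_eq_two] using hratio.const_add 1
  have := ((hratio.div hρ two_ne_zero).mul hd).add
    ((((hd.mul hlog).mul hinv).sub ((hlog.pow 2).const_mul 2)).div (hρ.pow 2) (by norm_num)) |>.add
    ((continuousAt_log one_ne_zero).tendsto.comp hratio)
  simp only [mul_zero, zero_pow two_ne_zero, sub_zero, zero_div, add_zero, log_one] at this
  rw [one_div_mul_eq_div] at this
  refine this.congr' ?_
  filter_upwards [hu, hs.eventually_gt_atTop 0] with x hx hsx
  exact (mul_sub_add_log_eq hx hsx).symm

end

lemma log_sqrt_two_pi_mul_mul_exp_div {u y : ℝ} (hu : 0 < u) (hy : 0 < y) :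
    log (√(2 * π) * u * exp (u ^ 2 / 2) / y) =
      (u ^ 2 + 2 * log u - 2 * log y + log (2 * π)) / 2 := by
  have hπ : 0 < √(2 * π) := by positivity
  rw [log_div (by positivity) hy.ne', log_mul (by positivity) (exp_pos _).ne',
    log_mul hπ.ne' hu.ne', log_exp, log_sqrt (by positivity)]
  ring

lemma log_sqrt_two_mul_log {y : ℝ} (hy : 1 < y) :
    log √(2 * log y) = (1 / 2) * log (log y) + log (2 * √π) - log (2 * π) / 2 := by
  have hπ : 0 < √π := by positivity
  rw [log_sqrt (by positivity [log_pos hy]), log_mul two_ne_zero (log_pos hy).ne',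
    log_mul two_ne_zero hπ.ne', log_sqrt pi_pos.le, log_mul two_ne_zero pi_ne_zero]
  ring

/-- If `√(2π) uₙ e^{uₙ²/2} ~ n`, then
`uₙ = √(2 log n) − ((1/2) log log n + log(2√π) + o(1))/√(2 log n)`, i.e.
`√(2 log n)(uₙ − √(2 log n)) + (1/2) log log n + log(2√π) → 0`. -/
theorem asymptotic_expansion_of_un (u : ℕ → ℝ) (hu : ∀ n, 0 < u n)
    (h : Tendsto (fun n : ℕ => Real.sqrt (2 * π) * u n * Real.exp (u n ^ 2 / 2) / n)
      atTop (𝓝 1)) :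
    Tendsto (fun n : ℕ =>
        Real.sqrt (2 * Real.log n) * (u n - Real.sqrt (2 * Real.log n))
          + (1 / 2) * Real.log (Real.log n) + Real.log (2 * Real.sqrt π))
      atTop (𝓝 0) := by
  have hs : Tendsto (fun n : ℕ => √(2 * log n)) atTop atTop :=
    tendsto_sqrt_atTop.comp <|
      (tendsto_log_atTop.comp tendsto_natCast_atTop_atTop).const_mul_atTop two_pos
  have hd : Tendsto (fun n : ℕ => u n ^ 2 + 2 * log (u n) - √(2 * log n) ^ 2) atTop
      (𝓝 (-log (2 * π))) := by
    have := ((h.log one_ne_zero).const_mul 2).sub_const (log (2 * π))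
    rw [log_one, mul_zero, zero_sub] at this
    refine this.congr' ?_
    filter_upwards [eventually_ge_atTop 1] with n hn
    have hn' : (1 : ℝ) ≤ n := by exact_mod_cast hn
    rw [log_sqrt_two_pi_mul_mul_exp_div (hu n) (by linarith),
      sq_sqrt (by positivity [log_nonneg hn'])]
    ring
  have := (tendsto_mul_sub_add_log_of_tendsto_sq_add_two_mul_log_sub_sq
    (.of_forall hu) hs hd).add_const (log (2 * π) / 2)
  rw [neg_div, neg_add_cancel] at this
  refine this.congr' ?_
  filter_upwards [eventually_ge_atTop 2] with n hn
  rw [log_sqrt_two_mul_log (by exact_mod_cast hn)]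
  ring
end

section
/- Let α ∈ (0,1), t₀ > 0, sₙ = t₀/(2 log n)^{1/α}, and set rₙ(t₁,t₂) = ((t₀+sₙt₁)^α + (t₀+sₙt₂)^α − sₙ^α|t₁−t₂|^α)/2 and σₙ(t) = (t₀+sₙt)^{α/2}. Then for all t₁,t₂ ∈ ℝ, limₙ 4 log n · (1 − rₙ(t₁,t₂)/(σₙ(t₁)σₙ(t₂))) = |t₁−t₂|^α. -/
open Filter Topology

/-!
Write `A, B` for `σₙ(t₁), σₙ(t₂)`. Since `4 log n = 2 t₀^α / sₙ^α`, the quantity equals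
`t₀^α (|t₁ - t₂|^α - (A - B)² / sₙ^α) / (A B)`. As `x ↦ (t₀ + x t)^{α/2}` is differentiable at `0`,
`A - B = O(sₙ)`, so `(A - B)² / sₙ^α = O(sₙ^{2-α}) → 0`, while `A B → t₀^α`.
-/

theorem tendsto_sq_div_rpow_nhdsGT_zero {f : ℝ → ℝ} (hf : DifferentiableAt ℝ f 0) (hf0 : f 0 = 0)
    {p : ℝ} (hp : p < 2) : Tendsto (fun x => f x ^ 2 / x ^ p) (𝓝[>] 0) (𝓝 0) := by
  have hslope : Tendsto (fun x => f x / x) (𝓝[>] 0) (𝓝 (deriv f 0)) := by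
    refine ((hasDerivAt_iff_tendsto_slope.mp hf.hasDerivAt).mono_left
      (nhdsWithin_mono _ fun x (hx : 0 < x) => hx.ne')).congr fun x => ?_
    simp [slope, hf0, div_eq_inv_mul]
  have hpow : Tendsto (fun x : ℝ => x ^ (2 - p)) (𝓝[>] 0) (𝓝 0) := by
    simpa [Real.zero_rpow (sub_ne_zero.mpr hp.ne')] using
      ((Real.continuousAt_rpow_const 0 (2 - p) (Or.inr (sub_nonneg.mpr hp.le))).tendsto).mono_left
        nhdsWithin_le_nhds
  refine (by simpa using (hslope.pow 2).mul hpow :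
    Tendsto (fun x => (f x / x) ^ 2 * x ^ (2 - p)) (𝓝[>] 0) (𝓝 0)).congr' ?_
  filter_upwards [self_mem_nhdsWithin] with x (hx : 0 < x)
  rw [Real.rpow_sub hx, Real.rpow_two]
  field_simp

theorem rpow_div_rpow_one_div {α : ℝ} (hα : α ≠ 0) {t L : ℝ} (ht : 0 ≤ t) (hL : 0 ≤ L) :
    (t / L ^ (1 / α)) ^ α = t ^ α / L := by
  rw [Real.div_rpow ht (Real.rpow_nonneg hL _), ← Real.rpow_mul hL, one_div_mul_cancel hα,
    Real.rpow_one]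

theorem tendsto_div_two_mul_log_rpow_nhdsGT_zero {α t₀ : ℝ} (hα : 0 < α) (ht₀ : 0 < t₀) :
    Tendsto (fun n : ℕ => t₀ / (2 * Real.log n) ^ (1 / α)) atTop (𝓝[>] 0) := by
  have hlog : Tendsto (fun n : ℕ => 2 * Real.log n) atTop atTop :=
    (Real.tendsto_log_atTop.comp tendsto_natCast_atTop_atTop).const_mul_atTop two_pos
  refine tendsto_nhdsWithin_of_tendsto_nhds_of_eventually_within _
    (tendsto_const_nhds.div_atTop ((tendsto_rpow_atTop (by positivity)).comp hlog)) ?_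
  filter_upwards [hlog.eventually_gt_atTop 0] with n hn
  exact div_pos ht₀ (Real.rpow_pos_of_pos hn _)

theorem scaled_one_sub_div_mul_eq {A B S T D : ℝ} (hA : A ≠ 0) (hB : B ≠ 0) (hS : S ≠ 0) :
    2 * T / S * (1 - (A ^ 2 + B ^ 2 - S * D) / 2 / (A * B)) =
      T * (D - (A - B) ^ 2 / S) / (A * B) := by
  field_simp
  ring

theorem tendsto_fbm_correlation_defect {α t₀ : ℝ} (hα : α < 2) (ht₀ : 0 < t₀)
    (t₁ t₂ : ℝ) :
    Tendsto (fun x : ℝ => 2 * t₀ ^ α / x ^ α *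
        (1 - ((t₀ + x * t₁) ^ α + (t₀ + x * t₂) ^ α - x ^ α * |t₁ - t₂| ^ α) / 2 /
          ((t₀ + x * t₁) ^ (α / 2) * (t₀ + x * t₂) ^ (α / 2))))
      (𝓝[>] 0) (𝓝 (|t₁ - t₂| ^ α)) := by
  have hdiff : ∀ c : ℝ, DifferentiableAt ℝ (fun x : ℝ => (t₀ + x * c) ^ (α / 2)) 0 := fun c =>
    (by fun_prop : DifferentiableAt ℝ (fun x : ℝ => t₀ + x * c) 0).rpow_const
      (Or.inl (by simpa using ht₀.ne'))
  have hbase : ∀ c : ℝ, ∀ᶠ x in 𝓝[>] (0 : ℝ), 0 < t₀ + x * c := fun c =>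
    (((continuous_const.add (continuous_id.mul continuous_const)).tendsto' 0 t₀
      (by simp)).eventually_const_lt ht₀).filter_mono nhdsWithin_le_nhds
  have hsq : ∀ c : ℝ, ∀ᶠ x in 𝓝[>] (0 : ℝ),
      ((t₀ + x * c) ^ (α / 2)) ^ 2 = (t₀ + x * c) ^ α := fun c => by
    filter_upwards [hbase c] with x hx
    rw [← Real.rpow_natCast, ← Real.rpow_mul hx.le]; norm_num
  have hlim : ∀ c : ℝ,
      Tendsto (fun x : ℝ => (t₀ + x * c) ^ (α / 2)) (𝓝[>] 0) (𝓝 (t₀ ^ (α / 2))) :=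
    fun c => by simpa using (hdiff c).continuousAt.tendsto.mono_left nhdsWithin_le_nhds
  have hdefect := tendsto_sq_div_rpow_nhdsGT_zero ((hdiff t₁).sub (hdiff t₂)) (by simp) hα
  have hAB : t₀ ^ (α / 2) * t₀ ^ (α / 2) = t₀ ^ α := by rw [← Real.rpow_add ht₀]; norm_num
  have key := ((tendsto_const_nhds (x := |t₁ - t₂| ^ α)).sub hdefect).const_mul (t₀ ^ α) |>.div
    ((hlim t₁).mul (hlim t₂)) (by rw [hAB]; positivity)
  rw [hAB, sub_zero, mul_div_cancel_left₀ _ (by positivity)] at key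
  refine key.congr' ?_
  filter_upwards [self_mem_nhdsWithin, hbase t₁, hbase t₂, hsq t₁, hsq t₂]
    with x (hx : 0 < x) h₁ h₂ e₁ e₂
  rw [← e₁, ← e₂, scaled_one_sub_div_mul_eq (by positivity) (by positivity) (by positivity)]
  rfl

/-- For fBm with index `α ∈ (0,1)` and scaling `sₙ = t₀/(2 log n)^{1/α}`:
`4 log n · (1 − rₙ(t₁,t₂)/(σₙ(t₁)σₙ(t₂))) → |t₁−t₂|^α`. -/
theorem fbm_max_scaling_limit_alpha_lt_one (α t₀ : ℝ) (hα : α ∈ Set.Ioo (0 : ℝ) 1)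
    (ht₀ : 0 < t₀)
    (s : ℕ → ℝ) (hs : ∀ n : ℕ, s n = t₀ / (2 * Real.log n) ^ (1 / α))
    (r : ℕ → ℝ → ℝ → ℝ)
    (hr : ∀ n x₁ x₂, r n x₁ x₂ =
      ((t₀ + s n * x₁) ^ α + (t₀ + s n * x₂) ^ α - s n ^ α * |x₁ - x₂| ^ α) / 2)
    (σ : ℕ → ℝ → ℝ) (hσ : ∀ n x, σ n x = (t₀ + s n * x) ^ (α / 2))
    (t₁ t₂ : ℝ) :
    Tendsto (fun n : ℕ => 4 * Real.log n * (1 - r n t₁ t₂ / (σ n t₁ * σ n t₂)))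
      atTop (𝓝 (|t₁ - t₂| ^ α)) := by
  obtain ⟨hα₀, hα₁⟩ := hα
  have hs₀ : Tendsto s atTop (𝓝[>] 0) := by
    simpa only [← funext hs] using tendsto_div_two_mul_log_rpow_nhdsGT_zero hα₀ ht₀
  refine ((tendsto_fbm_correlation_defect (by linarith) ht₀ t₁ t₂).comp hs₀).congr' ?_
  filter_upwards [(Real.tendsto_log_atTop.comp tendsto_natCast_atTop_atTop).eventually_gt_atTop 0]
    with n hn
  have hscale : 2 * t₀ ^ α / s n ^ α = 4 * Real.log n := by
    rw [hs, rpow_div_rpow_one_div hα₀.ne' ht₀.le (by positivity)]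
    field_simp [(Real.rpow_pos_of_pos ht₀ α).ne']
    ring
  simp only [Function.comp_apply, hr, hσ, hscale]
end

section
/- Let α ∈ (1,2], t₀ > 0, and sₙ → 0 with sₙ = O(1/log n). With rₙ(t₁,t₂) = ((t₀+sₙt₁)^α + (t₀+sₙt₂)^α − sₙ^α|t₁−t₂|^α)/2 and σₙ(t) = (t₀+sₙt)^{α/2}, for all t₁,t₂ ∈ ℝ: limₙ 4 log n · (1 − rₙ(t₁,t₂)/(σₙ(t₁)σₙ(t₂))) = 0. -/
/-!
Write `a = t₀ + sₙt₁`, `b = t₀ + sₙt₂` and `A = a^{α/2}`, `B = b^{α/2}`. Then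
`1 - rₙ/(σₙσₙ) = (|a - b|^α - (A - B)²) / (2AB)`, and since `x ↦ x^{α/2}` is `α/2`-Hölder
with constant one, `0 ≤ (A - B)² ≤ |a - b|^α = sₙ^α |t₁ - t₂|^α`. Hence the quantity is
`O(log n · sₙ^α) = O(sₙ^{α-1})`, which tends to zero because `α > 1`.
-/

open Filter Topology Asymptotics

/-- The covariance `E[X_a X_b]` of fractional Brownian motion with index `α` (Hurst index `α/2`). -/
noncomputable def fbmCov (α a b : ℝ) : ℝ := (a ^ α + b ^ α - |a - b| ^ α) / 2

theorem abs_affine_sub_rpow (α t₀ : ℝ) {s : ℝ} (hs : 0 ≤ s) (x₁ x₂ : ℝ) :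
    |t₀ + s * x₁ - (t₀ + s * x₂)| ^ α = s ^ α * |x₁ - x₂| ^ α := by
  rw [show t₀ + s * x₁ - (t₀ + s * x₂) = s * (x₁ - x₂) by ring, abs_mul, abs_of_nonneg hs,
    Real.mul_rpow hs (abs_nonneg _)]

theorem Real.abs_rpow_sub_rpow_le {p x y : ℝ} (hp : 0 ≤ p) (hp1 : p ≤ 1) (hx : 0 ≤ x)
    (hy : 0 ≤ y) : |x ^ p - y ^ p| ≤ |x - y| ^ p := by
  wlog hyx : y ≤ x generalizing x y
  · rw [abs_sub_comm, abs_sub_comm x]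
    exact this hy hx (le_of_not_ge hyx)
  have hsub : x ^ p ≤ (x - y) ^ p + y ^ p := by
    simpa using Real.rpow_add_le_add_rpow (sub_nonneg.2 hyx) hy hp hp1
  have hmono : y ^ p ≤ x ^ p := Real.rpow_le_rpow hy hyx hp
  rw [abs_of_nonneg (sub_nonneg.2 hmono), abs_of_nonneg (sub_nonneg.2 hyx)]
  linarith

theorem abs_one_sub_fbmCov_div_le {α a b : ℝ} (hα₀ : 0 ≤ α) (hα₂ : α ≤ 2) (ha : 0 < a)
    (hb : 0 < b) :
    |1 - fbmCov α a b / (a ^ (α / 2) * b ^ (α / 2))| ≤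
      |a - b| ^ α / (2 * (a ^ (α / 2) * b ^ (α / 2))) := by
  set A := a ^ (α / 2)
  set B := b ^ (α / 2)
  have hsq {x : ℝ} (hx : 0 ≤ x) : (x ^ (α / 2)) ^ 2 = x ^ α := by
    rw [← Real.rpow_natCast, ← Real.rpow_mul hx]
    ring_nf
  have hA : 0 < A := by positivity
  have hB : 0 < B := by positivity
  have hholder : (A - B) ^ 2 ≤ |a - b| ^ α := by
    rw [← sq_abs, ← hsq (abs_nonneg _)]
    gcongr
    exact Real.abs_rpow_sub_rpow_le (by linarith) (by linarith) ha.le hb.le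
  have hdeficit : 1 - fbmCov α a b / (A * B) = (|a - b| ^ α - (A - B) ^ 2) / (2 * (A * B)) := by
    rw [fbmCov, ← hsq ha.le, ← hsq hb.le]
    field_simp
    ring
  rw [hdeficit, abs_of_nonneg (by have := sq_nonneg (A - B); positivity)]
  gcongr
  exact sub_le_self _ (sq_nonneg _)

theorem tendsto_mul_rpow_of_isBigO_one_div {ι : Type*} {l : Filter ι} {f s : ι → ℝ} {α : ℝ}
    (hα : 1 < α) (hs : ∀ i, 0 ≤ s i) (hs0 : Tendsto s l (𝓝 0))
    (hsO : s =O[l] fun i => 1 / f i) :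
    Tendsto (fun i => f i * s i ^ α) l (𝓝 0) := by
  have hfs : (fun i => f i * s i) =O[l] fun _ => (1 : ℝ) := by
    refine ((isBigO_refl f l).mul hsO).trans (IsBigO.of_bound 1 (Eventually.of_forall fun i => ?_))
    rcases eq_or_ne (f i) 0 with h | h <;> simp [h]
  have hpow : Tendsto (fun i => s i ^ (α - 1)) l (𝓝 0) := by
    simpa [Real.zero_rpow (by linarith : α - 1 ≠ 0)] using
      hs0.rpow_const (p := α - 1) (Or.inr (by linarith))
  have hsplit : (fun i => f i * s i ^ α) = fun i => f i * s i * s i ^ (α - 1) := by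
    funext i
    rw [mul_assoc, ← Real.rpow_one_add' (hs i) (by linarith)]
    ring_nf
  rw [hsplit, ← isLittleO_one_iff ℝ]
  simpa using hfs.mul_isLittleO ((isLittleO_one_iff ℝ).2 hpow)

theorem tendsto_const_add_mul_const {ι : Type*} {l : Filter ι} {s : ι → ℝ}
    (hs0 : Tendsto s l (𝓝 0)) (t₀ x : ℝ) : Tendsto (fun i => t₀ + s i * x) l (𝓝 t₀) := by
  simpa using tendsto_const_nhds.add (hs0.mul_const x)

/-- For fBm with index `α ∈ (1,2]` and any scaling `sₙ → 0⁺` with `sₙ = O(1/log n)`: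
`4 log n · (1 − rₙ(t₁,t₂)/(σₙ(t₁)σₙ(t₂))) → 0`. -/
theorem fbm_max_scaling_limit_alpha_gt_one (α t₀ : ℝ) (hα : α ∈ Set.Ioc (1 : ℝ) 2)
    (ht₀ : 0 < t₀)
    (s : ℕ → ℝ) (hspos : ∀ n, 0 < s n) (hs0 : Tendsto s atTop (𝓝 0))
    (hsO : s =O[atTop] fun n : ℕ => 1 / Real.log n)
    (r : ℕ → ℝ → ℝ → ℝ)
    (hr : ∀ n x₁ x₂, r n x₁ x₂ =
      ((t₀ + s n * x₁) ^ α + (t₀ + s n * x₂) ^ α - s n ^ α * |x₁ - x₂| ^ α) / 2)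
    (σ : ℕ → ℝ → ℝ) (hσ : ∀ n x, σ n x = (t₀ + s n * x) ^ (α / 2))
    (t₁ t₂ : ℝ) :
    Tendsto (fun n : ℕ => 4 * Real.log n * (1 - r n t₁ t₂ / (σ n t₁ * σ n t₂)))
      atTop (𝓝 0) := by
  obtain ⟨hα₁, hα₂⟩ := hα
  set a := fun n => t₀ + s n * t₁
  set b := fun n => t₀ + s n * t₂
  have hpos (x : ℝ) : ∀ᶠ n in atTop, 0 < t₀ + s n * x :=
    (tendsto_const_add_mul_const hs0 t₀ x).eventually (lt_mem_nhds ht₀)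
  have hσlim (x : ℝ) : Tendsto (fun n => (t₀ + s n * x) ^ (α / 2)) atTop (𝓝 (t₀ ^ (α / 2))) :=
    (tendsto_const_add_mul_const hs0 t₀ x).rpow_const (Or.inl ht₀.ne')
  have hlog_mul_rpow : Tendsto (fun n : ℕ => Real.log n * s n ^ α) atTop (𝓝 0) :=
    tendsto_mul_rpow_of_isBigO_one_div hα₁ (fun n => (hspos n).le) hs0 hsO
  have hratio : Tendsto (fun n => |t₁ - t₂| ^ α / (a n ^ (α / 2) * b n ^ (α / 2))) atTop
      (𝓝 (|t₁ - t₂| ^ α / (t₀ ^ (α / 2) * t₀ ^ (α / 2)))) :=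
    tendsto_const_nhds.div ((hσlim t₁).mul (hσlim t₂)) (by positivity)
  refine squeeze_zero_norm' ?_ (by simpa using (hlog_mul_rpow.const_mul 2).mul hratio)
  filter_upwards [hpos t₁, hpos t₂] with n ha hb
  have hcov : r n t₁ t₂ = fbmCov α (a n) (b n) := by
    rw [hr, fbmCov, abs_affine_sub_rpow α t₀ (hspos n).le]
  calc ‖4 * Real.log n * (1 - r n t₁ t₂ / (σ n t₁ * σ n t₂))‖
      = 4 * Real.log n * |1 - fbmCov α (a n) (b n) / (a n ^ (α / 2) * b n ^ (α / 2))| := by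
        rw [Real.norm_eq_abs, abs_mul, abs_of_nonneg (by positivity), hcov, hσ, hσ]
    _ ≤ 4 * Real.log n * (|a n - b n| ^ α / (2 * (a n ^ (α / 2) * b n ^ (α / 2)))) := by
        gcongr
        exact abs_one_sub_fbmCov_div_le (by linarith) hα₂ ha hb
    _ = 2 * (Real.log n * s n ^ α) * (|t₁ - t₂| ^ α / (a n ^ (α / 2) * b n ^ (α / 2))) := by
        rw [abs_affine_sub_rpow α t₀ (hspos n).le]
        ring
end
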